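/- Fix a ∈ (-1,1) and set c = (a-1)/2. Define g : [-1,1] → ℝ by g(x) = c for x < a, g(a) = c + 1/2, and g(x) = c + 1 for x > a. Then for every integer p ≥ 1, the error of the p-th partial Legendre sum of g at the point of discontinuity x = a satisfies the exact identity g(a) - S_p(g)(a) = (1/2) P_{p+1}(a) P_p(a). -/

import Mathlib

open MeasureTheory Real Polynomial Finset

/-- The `n`-th Legendre polynomial (via Rodrigues' formula), normalized so that `P n 1 = 1`. -/
noncomputable def legendre (n : ℕ) : Polynomial ℝ :=
  ((2 ^ n * n.factorial : ℝ)⁻¹) • derivative^[n] ((X ^ 2 - 1) ^ n)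

/-- The `k`-th Legendre coefficient of `f : [-1,1] → ℝ`:  `c_k(f) = (k + 1/2) ∫_{-1}^1 f t P_k t dt`. -/
noncomputable def legendreCoeff (f : ℝ → ℝ) (k : ℕ) : ℝ :=
  ((k : ℝ) + 1 / 2) * ∫ t in (-1 : ℝ)..1, f t * (legendre k).eval t

/-- The `p`-th partial Legendre sum of `f`:  `S_p(f)(x) = ∑_{k=0}^p c_k(f) P_k(x)`. -/
noncomputable def legendreSum (f : ℝ → ℝ) (p : ℕ) (x : ℝ) : ℝ :=
  ∑ k ∈ Finset.range (p + 1), legendreCoeff f k * (legendre k).eval x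

/-!
Differentiating Rodrigues' formula twice gives `P'ₙ₊₂ - P'ₙ = (2n + 3) Pₙ₊₁`, and Leibniz' rule
at the roots of `X² - 1` gives `Pₙ(±1) = (±1)ⁿ`. Hence `∫₋₁¹ Pₖ = 0` and
`∫ₐ¹ Pₖ = (Pₖ₋₁(a) - Pₖ₊₁(a)) / (2k + 1)` for `k ≥ 1`, so the step function `g` has
`c₀(g) = c + (1 - a) / 2 = 0` and `cₖ(g) = (Pₖ₋₁(a) - Pₖ₊₁(a)) / 2`. The terms `cₖ(g) Pₖ(a)` then
telescope with `Fₖ = Pₖ(a) Pₖ₊₁(a) / 2`, giving `S_p(g)(a) = F₀ - F_p = a / 2 - F_p`, while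
`g(a) = a / 2`.
-/

section

variable {R : Type*} [CommRing R]

theorem derivative_X_sq_sub_one_pow_succ (k : ℕ) :
    derivative ((X ^ 2 - 1 : R[X]) ^ (k + 1)) = (2 * (k + 1)) • (X * (X ^ 2 - 1) ^ k) := by
  rw [derivative_pow]
  simp only [derivative_sub, derivative_X_pow, derivative_one, nsmul_eq_mul, C_eq_natCast]
  push_cast
  ring

theorem iterate_derivative_two_X_sq_sub_one_pow (m : ℕ) :
    derivative^[2] ((X ^ 2 - 1 : R[X]) ^ (m + 2)) =
      (2 * (m + 2) * (2 * m + 3)) • (X ^ 2 - 1) ^ (m + 1)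
        + (4 * (m + 2) * (m + 1)) • (X ^ 2 - 1) ^ m := by
  rw [Function.iterate_succ_apply, Function.iterate_one, derivative_X_sq_sub_one_pow_succ,
    derivative_smul, derivative_mul, derivative_X, derivative_X_sq_sub_one_pow_succ]
  simp only [nsmul_eq_mul]
  push_cast
  ring

theorem eval_iterate_derivative_X_sq_sub_one_pow {r : R} (hr : r ^ 2 = 1) (n : ℕ) :
    (derivative^[n] ((X ^ 2 - 1 : R[X]) ^ n)).eval r = n.factorial • (2 * r) ^ n := by
  have hfactor : ((X ^ 2 - 1 : R[X]) ^ n).map (algebraMap R R) = (X - C r) ^ n * (X + C r) ^ n := by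
    rw [Algebra.algebraMap_self, Polynomial.map_id, ← mul_pow,
      show (X - C r) * (X + C r) = X ^ 2 - C (r ^ 2) by rw [C_pow]; ring, hr, C_1]
  rw [← coe_aeval_eq_eval, aeval_iterate_derivative_self _ _ _ hfactor]
  simp [two_mul]

end

theorem legendre_zero : legendre 0 = 1 := by simp [legendre]

theorem legendre_one : legendre 1 = X := by
  simp only [legendre, Function.iterate_one, pow_one, derivative_sub, derivative_X_pow,
    derivative_one]
  norm_num [← smul_eq_C_mul, smul_smul]

theorem legendre_eval_of_sq_eq_one {r : ℝ} (hr : r ^ 2 = 1) (n : ℕ) :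
    (legendre n).eval r = r ^ n := by
  rw [legendre, eval_smul, eval_iterate_derivative_X_sq_sub_one_pow hr, nsmul_eq_mul, mul_pow,
    smul_eq_mul]
  field_simp

theorem derivative_legendre_add_two_sub (n : ℕ) :
    derivative (legendre (n + 2) - legendre n) = (2 * n + 3 : ℝ) • legendre (n + 1) := by
  simp only [legendre, derivative_sub, derivative_smul, ← Function.iterate_succ_apply' derivative]
  rw [show (n + 2).succ = (n + 1) + 2 from rfl, Function.iterate_add_apply,
    iterate_derivative_two_X_sq_sub_one_pow, iterate_map_add, iterate_derivative_smul,
    iterate_derivative_smul, ← Nat.cast_smul_eq_nsmul ℝ, ← Nat.cast_smul_eq_nsmul ℝ]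
  simp only [Nat.factorial_succ, smul_smul]
  match_scalars <;> field_simp <;> ring

theorem integral_legendre_succ (n : ℕ) (x y : ℝ) :
    ∫ t in x..y, (legendre (n + 1)).eval t =
      ((legendre (n + 2) - legendre n).eval y - (legendre (n + 2) - legendre n).eval x)
        / (2 * n + 3) := by
  set Q := legendre (n + 2) - legendre n
  have hQ : ∀ t, (legendre (n + 1)).eval t = (derivative Q).eval t / (2 * n + 3) := fun t => by
    rw [derivative_legendre_add_two_sub, eval_smul, smul_eq_mul]
    field_simp
  simp_rw [hQ]
  rw [intervalIntegral.integral_div, intervalIntegral.integral_eq_sub_of_hasDerivAt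
    (fun t _ => Q.hasDerivAt t) (Q.derivative.continuous.intervalIntegrable x y)]

theorem integral_legendre_succ_neg_one_one (n : ℕ) :
    ∫ t in (-1 : ℝ)..1, (legendre (n + 1)).eval t = 0 := by
  have hsymm : ∀ r : ℝ, r ^ 2 = 1 → (legendre (n + 2) - legendre n).eval r = 0 := fun r hr => by
    rw [eval_sub, legendre_eval_of_sq_eq_one hr, legendre_eval_of_sq_eq_one hr, pow_add, hr,
      mul_one, sub_self]
  rw [integral_legendre_succ, hsymm 1 (one_pow 2), hsymm (-1) (by norm_num)]
  simp

theorem integral_step_mul {u v a c : ℝ} (hua : u ≤ a) (hav : a ≤ v) {g f : ℝ → ℝ}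
    (hf : Continuous f) (hg_lt : ∀ x < a, g x = c) (hg_gt : ∀ x, a < x → g x = c + 1) :
    ∫ t in u..v, g t * f t = c * (∫ t in u..v, f t) + ∫ t in a..v, f t := by
  have hleft : ∀ᵐ t, t ∈ Set.uIoc u a → g t * f t = c * f t := by
    filter_upwards [Measure.ae_ne volume a] with t hta ht
    rw [Set.uIoc_of_le hua] at ht
    rw [hg_lt t (lt_of_le_of_ne ht.2 hta)]
  have hright : ∀ᵐ t, t ∈ Set.uIoc a v → g t * f t = (c + 1) * f t :=
    Filter.Eventually.of_forall fun t ht => by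
      rw [Set.uIoc_of_le hav] at ht
      rw [hg_gt t ht.1]
  have hintegrable : ∀ {x y : ℝ} {k : ℝ}, (∀ᵐ t, t ∈ Set.uIoc x y → g t * f t = k * f t) →
      IntervalIntegrable (fun t => g t * f t) volume x y := fun h =>
    ((continuous_const.mul hf).intervalIntegrable _ _).congr_ae
      (((ae_restrict_iff' measurableSet_uIoc).2 h).mono fun t ht => ht.symm)
  rw [← intervalIntegral.integral_add_adjacent_intervals (hintegrable hleft) (hintegrable hright),
    intervalIntegral.integral_congr_ae hleft, intervalIntegral.integral_congr_ae hright,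
    intervalIntegral.integral_const_mul, intervalIntegral.integral_const_mul,
    ← intervalIntegral.integral_add_adjacent_intervals (hf.intervalIntegrable u a)
      (hf.intervalIntegrable a v)]
  ring

section StepFunction

variable {a c : ℝ} {g : ℝ → ℝ}

theorem legendreCoeff_zero_of_step (ha : a ∈ Set.Icc (-1 : ℝ) 1)
    (hg_lt : ∀ x < a, g x = c) (hg_gt : ∀ x, a < x → g x = c + 1) :
    legendreCoeff g 0 = c + (1 - a) / 2 := by
  rw [legendreCoeff, integral_step_mul ha.1 ha.2 (legendre 0).continuous hg_lt hg_gt]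
  simp only [legendre_zero, eval_one, intervalIntegral.integral_const, smul_eq_mul]
  ring

theorem legendreCoeff_succ_of_step (ha : a ∈ Set.Icc (-1 : ℝ) 1)
    (hg_lt : ∀ x < a, g x = c) (hg_gt : ∀ x, a < x → g x = c + 1) (n : ℕ) :
    legendreCoeff g (n + 1) = ((legendre n).eval a - (legendre (n + 2)).eval a) / 2 := by
  rw [legendreCoeff, integral_step_mul ha.1 ha.2 (legendre (n + 1)).continuous hg_lt hg_gt,
    integral_legendre_succ_neg_one_one, integral_legendre_succ, eval_sub, eval_sub,
    legendre_eval_of_sq_eq_one (one_pow 2), legendre_eval_of_sq_eq_one (one_pow 2)]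
  push_cast
  field_simp
  ring

theorem legendreSum_eval_of_step (ha : a ∈ Set.Icc (-1 : ℝ) 1) (hc : c = (a - 1) / 2)
    (hg_lt : ∀ x < a, g x = c) (hg_gt : ∀ x, a < x → g x = c + 1) (p : ℕ) :
    legendreSum g p a = (a - (legendre (p + 1)).eval a * (legendre p).eval a) / 2 := by
  have hcoeff₀ : legendreCoeff g 0 = 0 := by
    rw [legendreCoeff_zero_of_step ha hg_lt hg_gt, hc]
    ring
  let F : ℕ → ℝ := fun n => (legendre n).eval a * (legendre (n + 1)).eval a / 2
  have htelescope : ∀ n, legendreCoeff g (n + 1) * (legendre (n + 1)).eval a = F n - F (n + 1) :=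
    fun n => by
      rw [legendreCoeff_succ_of_step ha hg_lt hg_gt]
      ring
  rw [legendreSum, sum_range_succ', hcoeff₀, zero_mul, add_zero, sum_congr rfl fun n _ =>
    htelescope n, sum_range_sub']
  simp only [F, zero_add, legendre_zero, legendre_one, eval_one, eval_X]
  ring

end StepFunction

theorem stmt_5_general (a : ℝ) (ha : a ∈ Set.Ioo (-1 : ℝ) 1) (c : ℝ) (hc : c = (a - 1) / 2)
    (g : ℝ → ℝ)
    (hg₁ : ∀ x : ℝ, x < a → g x = c)
    (hg₂ : g a = c + 1 / 2)
    (hg₃ : ∀ x : ℝ, a < x → g x = c + 1)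
    (p : ℕ) :
    g a - legendreSum g p a = (1 / 2) * (legendre (p + 1)).eval a * (legendre p).eval a := by
  rw [legendreSum_eval_of_step (Set.Ioo_subset_Icc_self ha) hc hg₁ hg₃, hg₂, hc]
  ring

/-- exact identity for the error at the point of discontinuity. -/
theorem stmt_5 (a : ℝ) (ha : a ∈ Set.Ioo (-1 : ℝ) 1) (c : ℝ) (hc : c = (a - 1) / 2)
    (g : ℝ → ℝ)
    (hg₁ : ∀ x : ℝ, x < a → g x = c)
    (hg₂ : g a = c + 1 / 2)
    (hg₃ : ∀ x : ℝ, a < x → g x = c + 1)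
    (p : ℕ) (hp : 1 ≤ p) :
    g a - legendreSum g p a = (1 / 2) * (legendre (p + 1)).eval a * (legendre p).eval a :=
  stmt_5_general a ha c hc g hg₁ hg₂ hg₃ p
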